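/- arXiv:1609.08665 — 2 statements merged into one kernel-verified Lean document; each statement's English description precedes it below -/
import Mathlib

section
/- Let Θ be a compact metric space, θ^c ∈ Θ, and (P_n) a sequence of Borel probability measures on Θ converging weakly to the Dirac point mass δ_{θ^c}. Let H : Θ → ℝ be continuous and α ∈ (0,1). Then CVaR^α_{P_n}[H] → H(θ^c) as n → ∞, where CVaR^α_{P_n}[H] := (1/(1−α)) ∫_α^1 VaR^r_{P_n}[H] dr and VaR^r_{P_n}[H] := inf{t ∈ ℝ : P_n({θ : H(θ) ≤ t}) ≥ r}. -/
open MeasureTheory Filter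

/-- The value-at-risk of `f` under `P` at level `r`:
`VaR^r_P(f) = inf {t : ℝ | P({f ≤ t}) ≥ r}`. -/
noncomputable def VaR {Θ : Type*} [MeasurableSpace Θ]
    (r : ℝ) (P : Measure Θ) (f : Θ → ℝ) : ℝ :=
  sInf {t : ℝ | r ≤ (P {θ | f θ ≤ t}).toReal}

/-- The conditional value-at-risk of `f` under `P` at level `α`:
`CVaR^α_P(f) = (1/(1-α)) ∫_α^1 VaR^r_P(f) dr`. -/
noncomputable def CVaR {Θ : Type*} [MeasurableSpace Θ]
    (α : ℝ) (P : Measure Θ) (f : Θ → ℝ) : ℝ :=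
  (1 / (1 - α)) * ∫ r in α..1, VaR r P f

section Aux

variable {Θ : Type*} [MetricSpace Θ] [CompactSpace Θ] [MeasurableSpace Θ] [BorelSpace Θ]

lemma VaR_set_nonempty {P : Measure Θ} [IsProbabilityMeasure P] {H : Θ → ℝ} {M : ℝ}
    (hM : ∀ θ, H θ ≤ M) {r : ℝ} (hr : r ≤ 1) :
    M ∈ {t : ℝ | r ≤ (P {θ | H θ ≤ t}).toReal} := by
  have : {θ | H θ ≤ M} = Set.univ := Set.eq_univ_of_forall fun θ => hM θ
  simp [this, hr]

lemma VaR_set_lb {P : Measure Θ} {H : Θ → ℝ} {m : ℝ}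
    (hm : ∀ θ, m ≤ H θ) {r : ℝ} (hr : 0 < r) :
    ∀ t ∈ {t : ℝ | r ≤ (P {θ | H θ ≤ t}).toReal}, m ≤ t := by
  intro t ht
  by_contra hlt
  push_neg at hlt
  have : {θ | H θ ≤ t} = ∅ := by
    ext θ; simp only [Set.mem_setOf_eq, Set.mem_empty_iff_false, iff_false, not_le]
    exact lt_of_lt_of_le hlt (hm θ)
  rw [Set.mem_setOf_eq, this] at ht
  simp at ht
  linarith

/-- Pointwise convergence of VaR. -/
lemma VaR_tendsto (θc : Θ) (P : ℕ → Measure Θ) (hprob : ∀ n, IsProbabilityMeasure (P n))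
    (hweak : ∀ g : BoundedContinuousFunction Θ ℝ,
      Tendsto (fun n => ∫ θ, g θ ∂(P n)) atTop (nhds (g θc)))
    (H : Θ → ℝ) (hH : Continuous H) (M : ℝ) (hM : ∀ θ, H θ ≤ M)
    (r : ℝ) (hr : r ∈ Set.Ioo (0 : ℝ) 1) :
    Tendsto (fun n => VaR r (P n) H) atTop (nhds (H θc)) := by
  have hsmeas : ∀ c : ℝ, MeasurableSet {θ | H θ ≤ c} := fun c =>
    measurableSet_le hH.measurable measurable_const
  have hne : Nonempty Θ := ⟨θc⟩
  rw [Metric.tendsto_nhds]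
  intro ε hε
  -- upper bound: eventually VaR ≤ H θc + ε/2
  set φ : BoundedContinuousFunction Θ ℝ :=
    BoundedContinuousFunction.mkOfCompact
      ⟨fun θ => max 0 (min 1 ((H θc + ε/2 - H θ) / (ε/2))), by fun_prop⟩ with hφdef
  have hφc : φ θc = 1 := by
    simp only [hφdef, BoundedContinuousFunction.mkOfCompact_apply, ContinuousMap.coe_mk]
    rw [show H θc + ε/2 - H θc = ε/2 by ring, div_self (by linarith)]
    norm_num
  have hφup : ∀ n, ∫ θ, φ θ ∂(P n) ≤ ((P n) {θ | H θ ≤ H θc + ε/2}).toReal := by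
    intro n
    have := hprob n
    have h1 : ∀ θ, φ θ ≤ ({θ | H θ ≤ H θc + ε/2}).indicator (fun _ => (1:ℝ)) θ := by
      intro θ
      by_cases hθ : H θ ≤ H θc + ε/2
      · rw [Set.indicator_of_mem (show θ ∈ {θ | H θ ≤ H θc + ε/2} from hθ)]
        simp only [hφdef, BoundedContinuousFunction.mkOfCompact_apply, ContinuousMap.coe_mk]
        exact max_le (by norm_num) (min_le_left _ _)
      · rw [Set.indicator_of_notMem (show θ ∉ {θ | H θ ≤ H θc + ε/2} from hθ)]
        simp only [hφdef, BoundedContinuousFunction.mkOfCompact_apply, ContinuousMap.coe_mk]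
        push_neg at hθ
        have : (H θc + ε/2 - H θ) / (ε/2) ≤ 0 :=
          div_nonpos_of_nonpos_of_nonneg (by linarith) (by linarith)
        exact max_le le_rfl (le_trans (min_le_right _ _) this)
    calc ∫ θ, φ θ ∂(P n)
        ≤ ∫ θ, ({θ | H θ ≤ H θc + ε/2}).indicator (fun _ => (1:ℝ)) θ ∂(P n) :=
          integral_mono (φ.integrable (P n))
            ((integrable_const (1:ℝ)).indicator (hsmeas _)) h1
      _ = ((P n) {θ | H θ ≤ H θc + ε/2}).toReal := by
          rw [integral_indicator_const _ (hsmeas _)]; simp; rfl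
  have hup : ∀ᶠ n in atTop, VaR r (P n) H ≤ H θc + ε/2 := by
    have := (hweak φ).eventually (eventually_gt_nhds (hφc ▸ hr.2))
    filter_upwards [this] with n hn
    have := hprob n
    have hmem : H θc + ε/2 ∈ {t : ℝ | r ≤ ((P n) {θ | H θ ≤ t}).toReal} :=
      le_trans (le_of_lt hn) (hφup n)
    -- bounded below
    obtain ⟨θm, -, hθm⟩ := isCompact_univ.exists_isMinOn Set.univ_nonempty
      (hH.continuousOn (s := Set.univ))
    have hbdd : BddBelow {t : ℝ | r ≤ ((P n) {θ | H θ ≤ t}).toReal} :=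
      ⟨H θm, fun t ht => VaR_set_lb (fun θ => hθm (Set.mem_univ θ)) hr.1 t ht⟩
    exact csInf_le hbdd hmem
  -- lower bound: eventually H θc - ε/2 ≤ VaR
  set ψ : BoundedContinuousFunction Θ ℝ :=
    BoundedContinuousFunction.mkOfCompact
      ⟨fun θ => max 0 (min 1 ((H θc - H θ) / (ε/2))), by fun_prop⟩ with hψdef
  have hψc : ψ θc = 0 := by
    simp [hψdef]
  have hψlow : ∀ n, ((P n) {θ | H θ ≤ H θc - ε/2}).toReal ≤ ∫ θ, ψ θ ∂(P n) := by
    intro n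
    have := hprob n
    have h1 : ∀ θ, ({θ | H θ ≤ H θc - ε/2}).indicator (fun _ => (1:ℝ)) θ ≤ ψ θ := by
      intro θ
      by_cases hθ : H θ ≤ H θc - ε/2
      · rw [Set.indicator_of_mem (show θ ∈ {θ | H θ ≤ H θc - ε/2} from hθ)]
        simp only [hψdef, BoundedContinuousFunction.mkOfCompact_apply, ContinuousMap.coe_mk]
        have h2 : (1:ℝ) ≤ (H θc - H θ) / (ε/2) :=
          (le_div_iff₀ (by linarith)).2 (by linarith)
        have : min 1 ((H θc - H θ) / (ε/2)) = 1 := min_eq_left h2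
        rw [this]; norm_num
      · rw [Set.indicator_of_notMem (show θ ∉ {θ | H θ ≤ H θc - ε/2} from hθ)]
        simp only [hψdef, BoundedContinuousFunction.mkOfCompact_apply, ContinuousMap.coe_mk]
        exact le_max_left _ _
    calc ((P n) {θ | H θ ≤ H θc - ε/2}).toReal
        = ∫ θ, ({θ | H θ ≤ H θc - ε/2}).indicator (fun _ => (1:ℝ)) θ ∂(P n) := by
          rw [integral_indicator_const _ (hsmeas _)]; simp; rfl
      _ ≤ ∫ θ, ψ θ ∂(P n) :=
          integral_mono ((integrable_const (1:ℝ)).indicator (hsmeas _))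
            (ψ.integrable (P n)) h1
  have hlow : ∀ᶠ n in atTop, H θc - ε/2 ≤ VaR r (P n) H := by
    have := (hweak ψ).eventually (eventually_lt_nhds (hψc ▸ hr.1))
    filter_upwards [this] with n hn
    have := hprob n
    apply le_csInf ⟨M, VaR_set_nonempty hM hr.2.le⟩
    intro t ht
    by_contra hlt
    push_neg at hlt
    have hsub : {θ | H θ ≤ t} ⊆ {θ | H θ ≤ H θc - ε/2} :=
      fun θ hθ => le_trans hθ (le_of_lt hlt)
    have : ((P n) {θ | H θ ≤ t}).toReal ≤ ((P n) {θ | H θ ≤ H θc - ε/2}).toReal :=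
      ENNReal.toReal_mono (measure_ne_top _ _) (measure_mono hsub)
    rw [Set.mem_setOf_eq] at ht
    linarith [hψlow n]
  filter_upwards [hup, hlow] with n h1 h2
  rw [Real.dist_eq, abs_lt]
  constructor <;> linarith

end Aux

/-- If `P_n ⇒ δ_{θᶜ}` weakly on a compact metric space and `H` is continuous, then
`CVaR^α_{P_n}[H] → H θᶜ` for every `α ∈ (0,1)`. -/
theorem CVaR_tendsto_of_weak_convergence_to_dirac
    {Θ : Type*} [MetricSpace Θ] [CompactSpace Θ] [MeasurableSpace Θ] [BorelSpace Θ]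
    (θc : Θ) (P : ℕ → Measure Θ) (hprob : ∀ n, IsProbabilityMeasure (P n))
    (hweak : ∀ g : BoundedContinuousFunction Θ ℝ,
      Tendsto (fun n => ∫ θ, g θ ∂(P n)) atTop (nhds (g θc)))
    (H : Θ → ℝ) (hH : Continuous H) (α : ℝ) (hα : α ∈ Set.Ioo (0 : ℝ) 1) :
    Tendsto (fun n => CVaR α (P n) H) atTop (nhds (H θc)) := by
  have hneΘ : Nonempty Θ := ⟨θc⟩
  obtain ⟨θM, -, hθM⟩ := isCompact_univ.exists_isMaxOn Set.univ_nonempty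
    (hH.continuousOn (s := Set.univ))
  obtain ⟨θm, -, hθm⟩ := isCompact_univ.exists_isMinOn Set.univ_nonempty
    (hH.continuousOn (s := Set.univ))
  set M := H θM
  set m := H θm
  have hM : ∀ θ, H θ ≤ M := fun θ => hθM (Set.mem_univ θ)
  have hm : ∀ θ, m ≤ H θ := fun θ => hθm (Set.mem_univ θ)
  have hmM : m ≤ M := le_trans (hm θc) (hM θc)
  -- basic bounds on VaR on (0,1]
  have hVaR_bounds : ∀ n, ∀ r : ℝ, 0 < r → r ≤ 1 → m ≤ VaR r (P n) H ∧ VaR r (P n) H ≤ M := by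
    intro n r hr0 hr1
    have := hprob n
    have hne : M ∈ {t : ℝ | r ≤ ((P n) {θ | H θ ≤ t}).toReal} := VaR_set_nonempty hM hr1
    have hlb := VaR_set_lb (P := P n) hm hr0
    have hbdd : BddBelow {t : ℝ | r ≤ ((P n) {θ | H θ ≤ t}).toReal} := ⟨m, hlb⟩
    exact ⟨le_csInf ⟨M, hne⟩ hlb, csInf_le hbdd hne⟩
  have huIoc : Set.uIoc α (1:ℝ) = Set.Ioc α 1 := Set.uIoc_of_le hα.2.le
  -- monotone (hence measurable) version via clamping
  have hmono : ∀ n, Monotone (fun r : ℝ => VaR (min 1 (max r α)) (P n) H) := by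
    intro n r₁ r₂ hr
    have := hprob n
    set s₁ := min 1 (max r₁ α)
    set s₂ := min 1 (max r₂ α)
    have hs₁0 : 0 < s₁ := lt_min one_pos (lt_of_lt_of_le hα.1 (le_max_right _ _))
    have hle : s₁ ≤ s₂ := min_le_min le_rfl (max_le_max hr le_rfl)
    have hs₂1 : s₂ ≤ 1 := min_le_left _ _
    refine csInf_le_csInf ⟨m, VaR_set_lb hm hs₁0⟩ ⟨M, VaR_set_nonempty hM hs₂1⟩ ?_
    intro t ht
    exact le_trans hle ht
  have hclamp : ∀ r ∈ Set.uIoc α (1:ℝ), min 1 (max r α) = r := by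
    intro r hrr
    rw [huIoc] at hrr
    rw [max_eq_left hrr.1.le, min_eq_right hrr.2]
  -- dominated convergence
  have hint : Tendsto (fun n => ∫ r in α..1, VaR r (P n) H) atTop
      (nhds (∫ _ in α..1, H θc)) := by
    apply intervalIntegral.tendsto_integral_filter_of_dominated_convergence
      (bound := fun _ => max |m| |M|)
    · filter_upwards with n
      refine ((hmono n).measurable.aestronglyMeasurable).congr ?_
      rw [Filter.EventuallyEq, ae_restrict_iff' measurableSet_uIoc]
      filter_upwards with r hr
      rw [hclamp r hr]
    · filter_upwards with n
      filter_upwards with r hr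
      rw [huIoc] at hr
      obtain ⟨h1, h2⟩ := hVaR_bounds n r (lt_trans hα.1 hr.1) hr.2
      rw [Real.norm_eq_abs, abs_le]
      constructor
      · calc -(max |m| |M|) ≤ -|m| := neg_le_neg (le_max_left _ _)
          _ ≤ m := neg_abs_le m
          _ ≤ _ := h1
      · exact le_trans h2 (le_trans (le_abs_self M) (le_max_right _ _))
    · exact intervalIntegrable_const
    · have hne1 : ∀ᵐ r : ℝ, r ≠ 1 := by
        rw [ae_iff]
        simp only [ne_eq, not_not]
        have : {r : ℝ | r = 1} = {1} := by ext; simp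
        rw [this]
        exact Real.volume_singleton
      filter_upwards [hne1] with r hr1 hr
      rw [huIoc] at hr
      exact VaR_tendsto θc P hprob hweak H hH M hM r
        ⟨lt_trans hα.1 hr.1, lt_of_le_of_ne hr.2 hr1⟩
  have h1α : (1:ℝ) - α ≠ 0 := by
    have := hα.2; intro h; linarith
  have : Tendsto (fun n => CVaR α (P n) H) atTop
      (nhds ((1 / (1 - α)) * ∫ _ in α..1, H θc)) := by
    unfold CVaR
    exact hint.const_mul _
  convert this using 2
  rw [intervalIntegral.integral_const, smul_eq_mul]
  field_simp
end

section
/- Let P be a probability measure on a measurable space Θ, α ∈ (0,1), and f, g : Θ → ℝ bounded measurable functions. Then |CVaR^α_P(f) − CVaR^α_P(g)| ≤ (1/(1−α)) ∫_Θ |f − g| dP, where CVaR^α_P(f) := (1/(1−α)) ∫_α^1 VaR^r_P(f) dr and VaR^r_P(f) := inf{t ∈ ℝ : P({f ≤ t}) ≥ r}. -/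
open MeasureTheory

section Aux

open Set

variable {Θ : Type*} [MeasurableSpace Θ] (P : Measure Θ) [IsProbabilityMeasure P]

lemma aux_cdf_one {f : Θ → ℝ} {C t : ℝ} (hC : ∀ θ, |f θ| ≤ C) (ht : C ≤ t) :
    (P {θ | f θ ≤ t}).toReal = 1 := by
  have h1 : {θ | f θ ≤ t} = univ :=
    eq_univ_of_forall fun θ => le_trans (abs_le.mp (hC θ)).2 ht
  rw [h1, measure_univ, ENNReal.toReal_one]

lemma aux_mem_lb {f : Θ → ℝ} {C r : ℝ} (hC : ∀ θ, |f θ| ≤ C) (hr : 0 < r) :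
    ∀ s ∈ {t : ℝ | r ≤ (P {θ | f θ ≤ t}).toReal}, -C ≤ s := by
  intro s hs
  by_contra hlt
  push_neg at hlt
  have h0 : {θ | f θ ≤ s} = (∅ : Set Θ) := by
    apply eq_empty_of_forall_notMem
    intro θ hθ
    have := (abs_le.mp (hC θ)).1
    exact absurd (le_trans this hθ) (not_le.mpr hlt)
  simp only [mem_setOf_eq, h0, measure_empty, ENNReal.toReal_zero] at hs
  linarith

lemma aux_bddBelow {f : Θ → ℝ} {C r : ℝ} (hC : ∀ θ, |f θ| ≤ C) (hr : 0 < r) :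
    BddBelow {t : ℝ | r ≤ (P {θ | f θ ≤ t}).toReal} :=
  ⟨-C, aux_mem_lb P hC hr⟩

lemma aux_nonempty {f : Θ → ℝ} {C r : ℝ} (hC : ∀ θ, |f θ| ≤ C) (hr : r ≤ 1) :
    Set.Nonempty {t : ℝ | r ≤ (P {θ | f θ ≤ t}).toReal} :=
  ⟨C, by simp only [mem_setOf_eq, aux_cdf_one P hC le_rfl]; exact hr⟩

lemma aux_cdf_right_cont {f : Θ → ℝ} (hf : Measurable f) {r t : ℝ}
    (h : ∀ ε > (0 : ℝ), r ≤ (P {θ | f θ ≤ t + ε}).toReal) :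
    r ≤ (P {θ | f θ ≤ t}).toReal := by
  have hinter : (⋂ n : ℕ, {θ | f θ ≤ t + 1 / (n + 1)}) = {θ | f θ ≤ t} := by
    ext θ
    simp only [mem_iInter, mem_setOf_eq]
    constructor
    · intro h'
      by_contra hlt
      push_neg at hlt
      obtain ⟨n, hn⟩ := exists_nat_one_div_lt (sub_pos.mpr hlt)
      have := h' n
      linarith
    · intro h' n
      have : (0 : ℝ) ≤ 1 / ((n : ℝ) + 1) := by positivity
      linarith
  have hmeas : ∀ n : ℕ, NullMeasurableSet {θ | f θ ≤ t + 1 / ((n : ℝ) + 1)} P :=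
    fun n => (hf measurableSet_Iic).nullMeasurableSet
  have hanti : Antitone fun n : ℕ => {θ | f θ ≤ t + 1 / ((n : ℝ) + 1)} := by
    intro n m hnm θ hθ
    simp only [mem_setOf_eq] at *
    have h1 : (1 : ℝ) / ((m : ℝ) + 1) ≤ 1 / ((n : ℝ) + 1) := by
      have hc : ((n : ℕ) : ℝ) ≤ (m : ℝ) := Nat.cast_le.mpr hnm
      apply one_div_le_one_div_of_le (by positivity)
      linarith
    linarith
  have htend := MeasureTheory.tendsto_measure_iInter_atTop hmeas hanti
    ⟨0, measure_ne_top P _⟩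
  rw [hinter] at htend
  have htoReal : Filter.Tendsto (fun n : ℕ => (P {θ | f θ ≤ t + 1 / ((n : ℝ) + 1)}).toReal)
      Filter.atTop (nhds (P {θ | f θ ≤ t}).toReal) :=
    (ENNReal.tendsto_toReal (measure_ne_top P _)).comp htend
  exact ge_of_tendsto' htoReal fun n => h _ (by positivity)

lemma aux_VaR_le_iff {f : Θ → ℝ} {C : ℝ} (hf : Measurable f) (hC : ∀ θ, |f θ| ≤ C)
    {r : ℝ} (hr0 : 0 < r) (hr1 : r ≤ 1) (t : ℝ) :
    VaR r P f ≤ t ↔ r ≤ (P {θ | f θ ≤ t}).toReal := by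
  constructor
  · intro h
    apply aux_cdf_right_cont P hf
    intro ε hε
    have hlt : sInf {t : ℝ | r ≤ (P {θ | f θ ≤ t}).toReal} < t + ε := by
      unfold VaR at h; linarith
    obtain ⟨s, hs, hst⟩ := exists_lt_of_csInf_lt (aux_nonempty P hC hr1) hlt
    have hmono : (P {θ | f θ ≤ s}).toReal ≤ (P {θ | f θ ≤ t + ε}).toReal :=
      ENNReal.toReal_mono (measure_ne_top P _)
        (measure_mono fun θ hθ => le_trans hθ hst.le)
    exact le_trans hs hmono
  · intro h
    exact csInf_le (aux_bddBelow P hC hr0) h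

lemma aux_VaR_le_C {f : Θ → ℝ} {C : ℝ} (hC : ∀ θ, |f θ| ≤ C)
    {r : ℝ} (hr0 : 0 < r) (hr1 : r ≤ 1) : VaR r P f ≤ C :=
  csInf_le (aux_bddBelow P hC hr0)
    (by simp only [mem_setOf_eq, aux_cdf_one P hC le_rfl]; exact hr1)

lemma aux_neg_C_le_VaR {f : Θ → ℝ} {C : ℝ} (hC : ∀ θ, |f θ| ≤ C)
    {r : ℝ} (hr0 : 0 < r) (hr1 : r ≤ 1) : -C ≤ VaR r P f :=
  le_csInf (aux_nonempty P hC hr1) (aux_mem_lb P hC hr0)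

lemma aux_VaR_mono_r {f : Θ → ℝ} {C : ℝ} (hC : ∀ θ, |f θ| ≤ C)
    {r₁ r₂ : ℝ} (h1 : 0 < r₁) (h12 : r₁ ≤ r₂) (h2 : r₂ ≤ 1) :
    VaR r₁ P f ≤ VaR r₂ P f :=
  csInf_le_csInf (aux_bddBelow P hC h1) (aux_nonempty P hC h2)
    (fun t ht => le_trans h12 ht)

lemma aux_VaR_mono_f {f h : Θ → ℝ} {Cf Ch : ℝ} (hCf : ∀ θ, |f θ| ≤ Cf)
    (hCh : ∀ θ, |h θ| ≤ Ch) (hfh : ∀ θ, f θ ≤ h θ)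
    {r : ℝ} (hr0 : 0 < r) (hr1 : r ≤ 1) :
    VaR r P f ≤ VaR r P h := by
  apply csInf_le_csInf (aux_bddBelow P hCf hr0) (aux_nonempty P hCh hr1)
  intro t ht
  refine le_trans ht (ENNReal.toReal_mono (measure_ne_top P _) ?_)
  exact measure_mono fun θ hθ => le_trans (hfh θ) hθ

/-- The modified (globally monotone) quantile function. -/
noncomputable def auxQ (P : Measure Θ) (f : Θ → ℝ) (C : ℝ) : ℝ → ℝ :=
  fun r => if r ≤ 0 then -C else VaR (min r 1) P f

lemma aux_Q_monotone {f : Θ → ℝ} {C : ℝ} (hC : ∀ θ, |f θ| ≤ C) :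
    Monotone (auxQ P f C) := by
  intro r₁ r₂ h12
  unfold auxQ
  by_cases h1 : r₁ ≤ 0
  · by_cases h2 : r₂ ≤ 0
    · simp [h1, h2]
    · push_neg at h2
      simp only [h1, if_true, h2.not_ge, if_false]
      exact aux_neg_C_le_VaR P hC (lt_min h2 one_pos) (min_le_right _ _)
  · push_neg at h1
    have h2 : ¬ r₂ ≤ 0 := by linarith
    simp only [h1.not_ge, h2, if_false]
    exact aux_VaR_mono_r P hC (lt_min h1 one_pos)
      (min_le_min h12 le_rfl) (min_le_right _ _)

lemma aux_Q_eq_VaR {f : Θ → ℝ} {C : ℝ} {r : ℝ} (hr : r ∈ Ioc (0 : ℝ) 1) :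
    auxQ P f C r = VaR r P f := by
  unfold auxQ
  rw [if_neg (not_le.mpr hr.1), min_eq_left hr.2]

lemma aux_Q_bound {f : Θ → ℝ} {C : ℝ} (hC : ∀ θ, |f θ| ≤ C) (hC0 : 0 ≤ C) (r : ℝ) :
    |auxQ P f C r| ≤ C := by
  unfold auxQ
  by_cases h : r ≤ 0
  · simp [h, abs_of_nonpos (neg_nonpos.mpr hC0)]
  · push_neg at h
    rw [if_neg h.not_ge, abs_le]
    exact ⟨aux_neg_C_le_VaR P hC (lt_min h one_pos) (min_le_right _ _),
      aux_VaR_le_C P hC (lt_min h one_pos) (min_le_right _ _)⟩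

lemma aux_Q_integrable {f : Θ → ℝ} {C : ℝ} (hC : ∀ θ, |f θ| ≤ C) (hC0 : 0 ≤ C)
    {s : Set ℝ} (hs : volume s ≠ ⊤) :
    IntegrableOn (auxQ P f C) s volume := by
  have : IsFiniteMeasure ((volume : Measure ℝ).restrict s) :=
    ⟨by rwa [Measure.restrict_apply_univ, lt_top_iff_ne_top]⟩
  exact ⟨((aux_Q_monotone P hC).measurable).aestronglyMeasurable,
    HasFiniteIntegral.of_bounded (C := C) (Filter.Eventually.of_forall
      fun r => by simpa using aux_Q_bound P hC hC0 r)⟩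

lemma aux_VaR_integrableOn {f : Θ → ℝ} {C : ℝ} (hC : ∀ θ, |f θ| ≤ C) (hC0 : 0 ≤ C)
    {a b : ℝ} (hab : Ioc a b ⊆ Ioc (0:ℝ) 1) :
    IntegrableOn (fun r => VaR r P f) (Ioc a b) volume := by
  have hQ := (aux_Q_integrable P hC hC0 (s := Ioc a b)
    (by rw [Real.volume_Ioc]; exact ENNReal.ofReal_ne_top))
  apply hQ.congr_fun _ measurableSet_Ioc
  intro r hr
  exact aux_Q_eq_VaR P (hab hr)

/-- The key identity: the integral of the quantile function over `(0,1]` equals `∫ f dP`. -/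
lemma aux_integral_VaR {f : Θ → ℝ} {C : ℝ} (hf : Measurable f) (hC : ∀ θ, |f θ| ≤ C)
    (hC0 : 0 ≤ C) :
    ∫ r in Ioc (0:ℝ) 1, VaR r P f = ∫ θ, f θ ∂P := by
  set μ : Measure ℝ := (volume : Measure ℝ).restrict (Ioc 0 1) with hμ
  have hQmeas : Measurable (auxQ P f C) := (aux_Q_monotone P hC).measurable
  -- the pushforward of Lebesgue on (0,1] under Q is the law of f
  have hmap : Measure.map (auxQ P f C) μ = Measure.map f P := by
    have hfin : IsFiniteMeasure (Measure.map (auxQ P f C) μ) := by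
      constructor
      rw [Measure.map_apply hQmeas MeasurableSet.univ]
      simp [hμ, Real.volume_Ioc]
    refine Measure.ext_of_Iic _ _ (fun t => ?_)
    rw [Measure.map_apply hQmeas measurableSet_Iic,
        Measure.map_apply hf measurableSet_Iic, hμ,
        Measure.restrict_apply (hQmeas measurableSet_Iic)]
    have hset : (auxQ P f C ⁻¹' Iic t) ∩ Ioc 0 1
        = Ioc (0:ℝ) (min 1 ((P {θ | f θ ≤ t}).toReal)) := by
      ext r
      simp only [mem_inter_iff, mem_preimage, mem_Iic, mem_Ioc, lt_min_iff, le_min_iff]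
      constructor
      · rintro ⟨hQt, hr0, hr1⟩
        rw [aux_Q_eq_VaR P ⟨hr0, hr1⟩] at hQt
        exact ⟨hr0, hr1, (aux_VaR_le_iff P hf hC hr0 hr1 t).mp hQt⟩
      · rintro ⟨hr0, hr1, hrF⟩
        rw [aux_Q_eq_VaR P ⟨hr0, hr1⟩]
        exact ⟨(aux_VaR_le_iff P hf hC hr0 hr1 t).mpr hrF, hr0, hr1⟩
    rw [hset, Real.volume_Ioc]
    have hle1 : (P {θ | f θ ≤ t}).toReal ≤ 1 := by
      rw [← ENNReal.toReal_one]
      exact ENNReal.toReal_mono ENNReal.one_ne_top prob_le_one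
    rw [min_eq_right hle1, sub_zero, ENNReal.ofReal_toReal (measure_ne_top P _)]
    rfl
  have h1 : ∫ x, x ∂(Measure.map (auxQ P f C) μ) = ∫ r, auxQ P f C r ∂μ :=
    integral_map hQmeas.aemeasurable aestronglyMeasurable_id
  have h2 : ∫ x, x ∂(Measure.map f P) = ∫ θ, f θ ∂P :=
    integral_map hf.aemeasurable aestronglyMeasurable_id
  have h3 : ∫ r, auxQ P f C r ∂μ = ∫ r in Ioc (0:ℝ) 1, VaR r P f := by
    refine setIntegral_congr_fun measurableSet_Ioc (fun r hr => ?_)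
    exact aux_Q_eq_VaR P hr
  rw [← h3, ← h1, hmap, h2]

lemma aux_integrable_of_bounded {f : Θ → ℝ} {C : ℝ} (hf : Measurable f)
    (hC : ∀ θ, |f θ| ≤ C) : Integrable f P :=
  ⟨hf.aestronglyMeasurable,
    HasFiniteIntegral.of_bounded (C := C) (Filter.Eventually.of_forall fun θ => hC θ)⟩

/-- One-sided estimate. -/
lemma aux_CVaR_sub_le {α : ℝ} (hα : α ∈ Set.Ioo (0:ℝ) 1)
    {f g : Θ → ℝ} (hf : Measurable f) (hg : Measurable g)
    {Cf Cg : ℝ} (hCf : ∀ θ, |f θ| ≤ Cf) (hCg : ∀ θ, |g θ| ≤ Cg) :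
    CVaR α P f - CVaR α P g ≤ (1 / (1 - α)) * ∫ θ, |f θ - g θ| ∂P := by
  obtain ⟨hα0, hα1⟩ := hα
  have hΘ : Nonempty Θ := by
    by_contra h
    rw [not_nonempty_iff] at h
    have h1 : (P univ) = 1 := measure_univ
    rw [Set.univ_eq_empty_iff.mpr h, measure_empty] at h1
    exact zero_ne_one h1
  have hCf0 : 0 ≤ Cf := le_trans (abs_nonneg _) (hCf (Classical.arbitrary Θ))
  have hCg0 : 0 ≤ Cg := le_trans (abs_nonneg _) (hCg (Classical.arbitrary Θ))
  set h : Θ → ℝ := fun θ => g θ + |f θ - g θ| with hh_def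
  have hh : Measurable h := hg.add ((hf.sub hg).abs)
  set Ch : ℝ := Cg + (Cf + Cg) with hCh_def
  have hCh : ∀ θ, |h θ| ≤ Ch := by
    intro θ
    have h1 := abs_add_le (g θ) |f θ - g θ|
    rw [abs_abs] at h1
    have h3 : |f θ - g θ| ≤ |f θ| + |g θ| := abs_sub _ _
    have h4 := hCf θ
    have h5 := hCg θ
    simp only [hh_def, hCh_def]
    linarith
  have hCh0 : 0 ≤ Ch := by rw [hCh_def]; linarith
  have hfh : ∀ θ, f θ ≤ h θ := fun θ => by
    have := le_abs_self (f θ - g θ); simp only [hh_def]; linarith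
  have hgh : ∀ θ, g θ ≤ h θ := fun θ => by
    have := abs_nonneg (f θ - g θ); simp only [hh_def]; linarith
  -- integrability facts
  have hIocα : Ioc α 1 ⊆ Ioc (0:ℝ) 1 := Ioc_subset_Ioc hα0.le le_rfl
  have hIoc0α : Ioc (0:ℝ) α ⊆ Ioc (0:ℝ) 1 := Ioc_subset_Ioc le_rfl hα1.le
  have hIf : IntegrableOn (fun r => VaR r P f) (Ioc α 1) volume :=
    aux_VaR_integrableOn P hCf hCf0 hIocα
  have hIg1 : IntegrableOn (fun r => VaR r P g) (Ioc α 1) volume :=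
    aux_VaR_integrableOn P hCg hCg0 hIocα
  have hIh1 : IntegrableOn (fun r => VaR r P h) (Ioc α 1) volume :=
    aux_VaR_integrableOn P hCh hCh0 hIocα
  have hIg0 : IntegrableOn (fun r => VaR r P g) (Ioc 0 α) volume :=
    aux_VaR_integrableOn P hCg hCg0 hIoc0α
  have hIh0 : IntegrableOn (fun r => VaR r P h) (Ioc 0 α) volume :=
    aux_VaR_integrableOn P hCh hCh0 hIoc0α
  -- step A : ∫_{(α,1]} VaR f ≤ ∫_{(α,1]} VaR h
  have stepA : ∫ r in Ioc α 1, VaR r P f ≤ ∫ r in Ioc α 1, VaR r P h := by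
    refine setIntegral_mono_on hIf hIh1 measurableSet_Ioc (fun r hr => ?_)
    exact aux_VaR_mono_f P hCf hCh hfh (lt_trans hα0 hr.1) hr.2
  -- step B : ∫_{(0,α]} VaR g ≤ ∫_{(0,α]} VaR h
  have stepB : ∫ r in Ioc (0:ℝ) α, VaR r P g ≤ ∫ r in Ioc (0:ℝ) α, VaR r P h := by
    refine setIntegral_mono_on hIg0 hIh0 measurableSet_Ioc (fun r hr => ?_)
    exact aux_VaR_mono_f P hCg hCh hgh hr.1 (le_trans hr.2 hα1.le)
  -- splitting ∫_{(0,1]} = ∫_{(0,α]} + ∫_{(α,1]}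
  have hsplit : ∀ (φ : Θ → ℝ), IntegrableOn (fun r => VaR r P φ) (Ioc 0 α) volume →
      IntegrableOn (fun r => VaR r P φ) (Ioc α 1) volume →
      ∫ r in Ioc (0:ℝ) 1, VaR r P φ
        = (∫ r in Ioc (0:ℝ) α, VaR r P φ) + ∫ r in Ioc α 1, VaR r P φ := by
    intro φ h0 h1
    rw [← Set.Ioc_union_Ioc_eq_Ioc hα0.le hα1.le]
    exact setIntegral_union (Set.Ioc_disjoint_Ioc_of_le le_rfl) measurableSet_Ioc h0 h1
  -- the main chain
  have key : (∫ r in Ioc α 1, VaR r P f) - ∫ r in Ioc α 1, VaR r P g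
      ≤ ∫ θ, |f θ - g θ| ∂P := by
    have c1 : (∫ r in Ioc α 1, VaR r P h) - ∫ r in Ioc α 1, VaR r P g
        ≤ (∫ r in Ioc (0:ℝ) 1, VaR r P h) - ∫ r in Ioc (0:ℝ) 1, VaR r P g := by
      rw [hsplit h hIh0 hIh1, hsplit g hIg0 hIg1]
      linarith
    have c2 : (∫ r in Ioc (0:ℝ) 1, VaR r P h) - ∫ r in Ioc (0:ℝ) 1, VaR r P g
        = ∫ θ, |f θ - g θ| ∂P := by
      rw [aux_integral_VaR P hh hCh hCh0, aux_integral_VaR P hg hCg hCg0]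
      rw [← integral_sub (aux_integrable_of_bounded P hh hCh)
        (aux_integrable_of_bounded P hg hCg)]
      refine integral_congr_ae (Filter.Eventually.of_forall fun θ => ?_)
      simp [hh_def]
    linarith
  -- conclude
  have hden : (0:ℝ) < 1 - α := by linarith
  have hcpos : (0:ℝ) ≤ 1 / (1 - α) := by positivity
  unfold CVaR
  rw [intervalIntegral.integral_of_le hα1.le, intervalIntegral.integral_of_le hα1.le,
      ← mul_sub]
  exact mul_le_mul_of_nonneg_left key hcpos

end Aux

/-- For bounded measurable `f, g`,
`|CVaR^α_P(f) − CVaR^α_P(g)| ≤ (1/(1−α)) ∫ |f − g| dP`. -/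
theorem abs_CVaR_sub_CVaR_le
    {Θ : Type*} [MeasurableSpace Θ]
    (P : Measure Θ) [IsProbabilityMeasure P]
    (α : ℝ) (hα : α ∈ Set.Ioo (0 : ℝ) 1)
    (f g : Θ → ℝ) (hf : Measurable f) (hg : Measurable g)
    (Cf : ℝ) (hCf : ∀ θ, |f θ| ≤ Cf) (Cg : ℝ) (hCg : ∀ θ, |g θ| ≤ Cg) :
    |CVaR α P f - CVaR α P g| ≤ (1 / (1 - α)) * ∫ θ, |f θ - g θ| ∂P := by
  rw [abs_sub_le_iff]
  constructor
  · exact aux_CVaR_sub_le P hα hf hg hCf hCg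
  · have h1 := aux_CVaR_sub_le P hα hg hf hCg hCf
    have h2 : ∫ θ, |g θ - f θ| ∂P = ∫ θ, |f θ - g θ| ∂P := by
      refine integral_congr_ae (Filter.Eventually.of_forall fun θ => ?_)
      exact abs_sub_comm _ _
    rwa [h2] at h1
end
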